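/- If Z₁,…,Z_{n²} are i.i.d. random variables taking values in a finite set of codes 𝒞 with P(Z_i = C) = G(C), and for a fixed state sequence t^n the expected error satisfies Σ_C G(C) P_e(C,t^n) ≤ ν, then the probability that Σ_{i=1}^{n²} P_e(Z_i, t^n) > λn² is less than e^{−λn²}, where λ = log(ν·e² + 1). -/

import Mathlib

open scoped BigOperators
open Matrix Filter Topology
open scoped ComplexOrder

/-- Trace norm (sum of singular values) of a complex matrix. -/
noncomputable def traceNorm {ι : Type*} [Fintype ι] [DecidableEq ι]
    (A : Matrix ι ι ℂ) : ℝ :=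
  ((Matrix.posSemidef_conjTranspose_mul_self A).1.eigenvectorUnitary.1 *
      diagonal (((↑) : ℝ → ℂ) ∘ (√·) ∘ (Matrix.posSemidef_conjTranspose_mul_self A).1.eigenvalues) *
      (star (Matrix.posSemidef_conjTranspose_mul_self A).1.eigenvectorUnitary :
        Matrix ι ι ℂ)).trace.re

/-- A density operator: positive semidefinite with unit trace. -/
def IsDensity {ι : Type*} [Fintype ι] (ρ : Matrix ι ι ℂ) : Prop :=
  ρ.PosSemidef ∧ ρ.trace = 1

/-- Von Neumann entropy `S(ρ) = -tr(ρ log ρ)` (base-2 logarithm), via eigenvalues. -/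
noncomputable def vnEntropy {ι : Type*} [Fintype ι] [DecidableEq ι]
    (ρ : Matrix ι ι ℂ) : ℝ :=
  if h : ρ.IsHermitian then -∑ i, h.eigenvalues i * Real.logb 2 (h.eigenvalues i) else 0

/-- Holevo quantity `χ(P, {ρ_x})`. -/
noncomputable def holevo {X ι : Type*} [Fintype X] [Fintype ι] [DecidableEq ι]
    (P : X → ℝ) (ρ : X → Matrix ι ι ℂ) : ℝ :=
  vnEntropy (∑ x, (P x : ℂ) • ρ x) - ∑ x, P x * vnEntropy (ρ x)

/-- The set of probability distributions on a finite type. -/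
def FinDist (α : Type*) [Fintype α] : Type _ :=
  {p : α → ℝ // (∀ a, 0 ≤ p a) ∧ ∑ a, p a = 1}

/-- Tensor-product state corresponding to a codeword and a state sequence. -/
noncomputable def prodState {d n : ℕ} {X Θ' : Type*}
    (ρ : X → Θ' → Matrix (Fin d) (Fin d) ℂ) (c : Fin n → X) (t : Fin n → Θ') :
    Matrix (Fin n → Fin d) (Fin n → Fin d) ℂ :=
  fun a b => ∏ i, ρ (c i) (t i) (a i) (b i)

/-- A POVM: positive semidefinite operators summing to the identity. -/
def IsPOVM {ι κ : Type*} [Fintype ι] [DecidableEq ι] [Fintype κ]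
    (D : κ → Matrix ι ι ℂ) : Prop :=
  (∀ j, (D j).PosSemidef) ∧ ∑ j, D j = 1

/-- Average decoding error of a code under state sequence `t`. -/
noncomputable def avgError {d n : ℕ} {X Θ' : Type*} {J : ℕ}
    (ρ : X → Θ' → Matrix (Fin d) (Fin d) ℂ)
    (c : Fin J → Fin n → X)
    (D : Fin J → Matrix (Fin n → Fin d) (Fin n → Fin d) ℂ)
    (t : Fin n → Θ') : ℝ :=
  1 - (1 / (J : ℝ)) * ∑ j, ((prodState ρ (c j) t * D j).trace).re

/-- Holevo quantity of an ensemble with uniform distribution. -/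
noncomputable def uniformHolevo {ι : Type*} [Fintype ι] [DecidableEq ι] {J : ℕ}
    (τ : Fin J → Matrix ι ι ℂ) : ℝ :=
  vnEntropy ((J : ℂ)⁻¹ • ∑ j, τ j) - (1 / (J : ℝ)) * ∑ j, vnEntropy (τ j)

/-- Symmetrizability of a classical-quantum arbitrarily varying channel. -/
def Symmetrizable {d : ℕ} {X Θ' : Type*} [Fintype X] [Fintype Θ']
    (ρ : X → Θ' → Matrix (Fin d) (Fin d) ℂ) : Prop :=
  ∃ U : X → Θ' → ℝ, (∀ x, (∀ t, 0 ≤ U x t) ∧ ∑ t, U x t = 1) ∧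
    ∀ x x', ∑ t, (U x t : ℂ) • ρ x' t = ∑ t, (U x' t : ℂ) • ρ x t

/-- `R` is an achievable secrecy rate for the cq arbitrarily varying wiretap channel (no CSI). -/
def AchievableSecrecyRate {d : ℕ} {X Θ' : Type*} [Fintype X] [Fintype Θ']
    (ρ σ : X → Θ' → Matrix (Fin d) (Fin d) ℂ) (R : ℝ) : Prop :=
  ∀ ε > (0:ℝ), ∀ δ > (0:ℝ), ∀ ζ > (0:ℝ), ∃ N : ℕ, ∀ n ≥ N,
    ∃ J : ℕ, 0 < J ∧ ∃ c : Fin J → Fin n → X,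
      ∃ D : Fin J → Matrix (Fin n → Fin d) (Fin n → Fin d) ℂ, IsPOVM D ∧
        Real.logb 2 J / n > R - δ ∧
        (∀ t : Fin n → Θ', avgError ρ c D t < ε) ∧
        (∀ t : Fin n → Θ',
          (1 / (n : ℝ)) * uniformHolevo (fun j => prodState σ (c j) t) < ζ)

/-- `R` is an achievable secrecy rate with CSI at the transmitter. -/
def AchievableSecrecyRateCSI {d : ℕ} {X Θ' : Type*} [Fintype X] [Fintype Θ']
    (ρ σ : X → Θ' → Matrix (Fin d) (Fin d) ℂ) (R : ℝ) : Prop :=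
  ∀ ε > (0:ℝ), ∀ δ > (0:ℝ), ∀ ζ > (0:ℝ), ∃ N : ℕ, ∀ n ≥ N,
    ∃ J : ℕ, 0 < J ∧ ∃ c : (Fin n → Θ') → Fin J → Fin n → X,
      ∃ D : Fin J → Matrix (Fin n → Fin d) (Fin n → Fin d) ℂ, IsPOVM D ∧
        Real.logb 2 J / n > R - δ ∧
        (∀ t : Fin n → Θ', avgError ρ (c t) D t < ε) ∧
        (∀ t : Fin n → Θ',
          (1 / (n : ℝ)) * uniformHolevo (fun j => prodState σ (c t j) t) < ζ)

/-- Secrecy capacity (no CSI). -/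
noncomputable def secrecyCapacity {d : ℕ} {X Θ' : Type*} [Fintype X] [Fintype Θ']
    (ρ σ : X → Θ' → Matrix (Fin d) (Fin d) ℂ) : ℝ :=
  sSup {R : ℝ | 0 ≤ R ∧ AchievableSecrecyRate ρ σ R}

/-- Secrecy capacity with CSI at the transmitter. -/
noncomputable def secrecyCapacityCSI {d : ℕ} {X Θ' : Type*} [Fintype X] [Fintype Θ']
    (ρ σ : X → Θ' → Matrix (Fin d) (Fin d) ℂ) : ℝ :=
  sSup {R : ℝ | 0 ≤ R ∧ AchievableSecrecyRateCSI ρ σ R}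

/-- An orthogonal projection. -/
def IsProj {ι : Type*} [Fintype ι] (Q : Matrix ι ι ℂ) : Prop :=
  Qᴴ = Q ∧ Q * Q = Q

/-- Spectral projector of a Hermitian matrix onto the eigenvalues lying in `[lo, hi]`. -/
noncomputable def specProj {ι : Type*} [Fintype ι] [DecidableEq ι] {ρ : Matrix ι ι ℂ}
    (h : ρ.IsHermitian) (lo hi : ℝ) : Matrix ι ι ℂ :=
  (h.eigenvectorUnitary : Matrix ι ι ℂ) *
    Matrix.diagonal
      (fun k => if lo ≤ h.eigenvalues k ∧ h.eigenvalues k ≤ hi then (1 : ℂ) else 0) *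
    (h.eigenvectorUnitary : Matrix ι ι ℂ)ᴴ

/-- Tensor product of a family of `d × d` matrices. -/
noncomputable def tensorFam {d n : ℕ} (M : Fin n → Matrix (Fin d) (Fin d) ℂ) :
    Matrix (Fin n → Fin d) (Fin n → Fin d) ℂ :=
  Matrix.of fun a b => ∏ i, M i (a i) (b i)

open Classical in
noncomputable def invSqrt {ι : Type*} [Fintype ι] [DecidableEq ι]
    (M : Matrix ι ι ℂ) : Matrix ι ι ℂ :=
  if h : M.PosSemidef then (h.1.eigenvectorUnitary.1 * diagonal (((↑) : ℝ → ℂ) ∘ (√·) ∘ h.1.eigenvalues) *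
    (star h.1.eigenvectorUnitary : Matrix ι ι ℂ))⁻¹ else 0

/-!
Chernoff's method with exponent `2`. Markov's inequality for `exp (2 ∑ Pe(Zᵢ))` bounds the tail
probability by `e^{-2λn²} M^{n²}`, where `M = E[exp (2 Pe(Z))]`. Since `Pe ∈ [0,1]` and `exp` is
convex, `exp (2 Pe) ≤ 1 + (e² - 1) Pe`, so `M ≤ 1 + (e² - 1) ν < ν e² + 1 = e^λ`, and the tail is
below `e^{-2λn²} e^{λn²} = e^{-λn²}`.
-/

theorem exp_mul_le_one_add_mul_of_mem_Icc (t : ℝ) {x : ℝ} (hx : x ∈ Set.Icc (0 : ℝ) 1) :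
    Real.exp (t * x) ≤ 1 + (Real.exp t - 1) * x := by
  have h := convexOn_exp.2 (Set.mem_univ 0) (Set.mem_univ t) (sub_nonneg.2 hx.2) hx.1
    (sub_add_cancel 1 x)
  simp only [smul_eq_mul, mul_zero, zero_add, Real.exp_zero, mul_one] at h
  rw [mul_comm t x]
  linarith

theorem sum_mul_exp_mul_le {C : Type*} [Fintype C] (G X : C → ℝ) (hG0 : ∀ c, 0 ≤ G c)
    (hG1 : ∑ c, G c = 1) (hX : ∀ c, X c ∈ Set.Icc (0 : ℝ) 1) (t : ℝ) :
    ∑ c, G c * Real.exp (t * X c) ≤ 1 + (Real.exp t - 1) * ∑ c, G c * X c :=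
  calc ∑ c, G c * Real.exp (t * X c)
      ≤ ∑ c, G c * (1 + (Real.exp t - 1) * X c) := by
        gcongr with c
        exacts [hG0 c, exp_mul_le_one_add_mul_of_mem_Icc t (hX c)]
    _ = 1 + (Real.exp t - 1) * ∑ c, G c * X c := by
        simp only [mul_add, mul_one, Finset.sum_add_distrib, hG1, Finset.mul_sum]
        congr 1
        exact Finset.sum_congr rfl fun c _ => by ring

theorem sum_ite_lt_sum_le_exp_mul_pow {C : Type*} [Fintype C] (G X : C → ℝ)
    (hG : ∀ c, 0 ≤ G c) {s : ℝ} (hs : 0 ≤ s) (a : ℝ) (m : ℕ) :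
    ∑ z : Fin m → C, (if a < ∑ i, X (z i) then ∏ i, G (z i) else 0) ≤
      Real.exp (-(s * a)) * (∑ c, G c * Real.exp (s * X c)) ^ m := by
  have markov : ∀ z : Fin m → C, (if a < ∑ i, X (z i) then ∏ i, G (z i) else 0) ≤
      Real.exp (-(s * a)) * ∏ i, (G (z i) * Real.exp (s * X (z i))) := by
    intro z
    have hG_prod : 0 ≤ ∏ i, G (z i) := Finset.prod_nonneg fun i _ => hG (z i)
    rw [Finset.prod_mul_distrib, ← Real.exp_sum, ← Finset.mul_sum, mul_left_comm,
      ← Real.exp_add]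
    split_ifs with hlt
    · exact le_mul_of_one_le_right hG_prod (Real.one_le_exp (by nlinarith))
    · positivity
  calc _ ≤ ∑ z : Fin m → C, Real.exp (-(s * a)) * ∏ i, (G (z i) * Real.exp (s * X (z i))) :=
        Finset.sum_le_sum fun z _ => markov z
    _ = _ := by rw [← Finset.mul_sum, Fintype.sum_pow]

open Classical in
theorem derandomization_chernoff_general (C : Type) [Fintype C]
    (G : C → ℝ) (hG0 : ∀ c, 0 ≤ G c) (hG1 : ∑ c, G c = 1)
    (Pe : C → ℝ) (hPe : ∀ c, 0 ≤ Pe c ∧ Pe c ≤ 1)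
    (ν : ℝ) (hν : 0 < ν) (hmean : ∑ c, G c * Pe c ≤ ν)
    (n : ℕ) (hn : 0 < n) :
    ∑ z : Fin (n ^ 2) → C,
        (if Real.log (ν * Real.exp 2 + 1) * (n ^ 2 : ℝ) < ∑ i, Pe (z i)
          then ∏ i, G (z i) else 0) <
      Real.exp (-(Real.log (ν * Real.exp 2 + 1) * (n ^ 2 : ℝ))) := by
  set lam := Real.log (ν * Real.exp 2 + 1)
  set M := ∑ c, G c * Real.exp (2 * Pe c)
  have hexp_lam : Real.exp lam = ν * Real.exp 2 + 1 := Real.exp_log (by positivity)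
  have hM_lt : M < Real.exp lam := by
    have hM_le := sum_mul_exp_mul_le G Pe hG0 hG1 hPe 2
    have he2 : 1 < Real.exp 2 := Real.one_lt_exp_iff.2 two_pos
    nlinarith
  have hM_nonneg : 0 ≤ M := Finset.sum_nonneg fun c _ => mul_nonneg (hG0 c) (Real.exp_pos _).le
  calc _ ≤ Real.exp (-(2 * (lam * (n ^ 2 : ℝ)))) * M ^ (n ^ 2) :=
        sum_ite_lt_sum_le_exp_mul_pow G Pe hG0 zero_le_two _ _
    _ < Real.exp (-(2 * (lam * (n ^ 2 : ℝ)))) * Real.exp lam ^ (n ^ 2) := by gcongr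
    _ = Real.exp (-(lam * (n ^ 2 : ℝ))) := by
        rw [← Real.exp_nat_mul, ← Real.exp_add]
        push_cast
        ring_nf

open Classical in
/-- Chernoff-type bound: for `n²` i.i.d. code-valued random variables with per-sample expected
error at most `ν`, the probability that the total error exceeds `λn²` with
`λ = log(ν e² + 1)` is less than `e^{-λn²}`. -/
theorem derandomization_chernoff (C : Type) [Fintype C] [Nonempty C]
    (G : C → ℝ) (hG0 : ∀ c, 0 ≤ G c) (hG1 : ∑ c, G c = 1)
    (Pe : C → ℝ) (hPe : ∀ c, 0 ≤ Pe c ∧ Pe c ≤ 1)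
    (ν : ℝ) (hν : 0 < ν) (hmean : ∑ c, G c * Pe c ≤ ν)
    (n : ℕ) (hn : 0 < n) :
    ∑ z : Fin (n ^ 2) → C,
        (if Real.log (ν * Real.exp 2 + 1) * (n ^ 2 : ℝ) < ∑ i, Pe (z i)
          then ∏ i, G (z i) else 0) <
      Real.exp (-(Real.log (ν * Real.exp 2 + 1) * (n ^ 2 : ℝ))) :=
  derandomization_chernoff_general C G hG0 hG1 Pe hPe ν hν hmean n hn
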